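/- (Shifted spectral-gap inequality for the Fokker–Planck operator) Let Y = L²(ℝ², e^{|η|²/4} dη) with inner product ⟨f,g⟩_Y = ∫ f g e^{|η|²/4} dη, and L = Δ + (1/2)η·∇ + 1. Then for every smooth rapidly decaying W with ∫_{ℝ²} W dη = 0: ⟨W, LW⟩_Y = ‖W‖²_Y − ‖∇W‖²_Y ≤ −(1/12)‖W‖²_Y − (1/96)‖ηW‖²_Y − (1/6)‖∇W‖²_Y. -/

import Mathlib

open Real MeasureTheory

noncomputable section

/-- First partial derivative. -/
def pd1 (f : ℝ × ℝ → ℝ) (p : ℝ × ℝ) : ℝ := deriv (fun x => f (x, p.2)) p.1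

/-- Second partial derivative. -/
def pd2 (f : ℝ × ℝ → ℝ) (p : ℝ × ℝ) : ℝ := deriv (fun y => f (p.1, y)) p.2

/-- The Gaussian weight `e^{|η|²/4}` of the space `Y`. -/
def wt (η : ℝ × ℝ) : ℝ := Real.exp ((η.1 ^ 2 + η.2 ^ 2) / 4)

/-- The Fokker–Planck operator `L = Δ + (1/2) η·∇ + 1`. -/
def LFP (W : ℝ × ℝ → ℝ) (η : ℝ × ℝ) : ℝ :=
  pd1 (pd1 W) η + pd2 (pd2 W) η + (1 / 2) * (η.1 * pd1 W η + η.2 * pd2 W η) + W η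

/-!
Write `W = e^{-|η|²/4} V`. Conjugation by the Gaussian turns `∂ᵢ W` into `e^{-|η|²/4} Gᵢ V`
with `Gᵢ V = ∂ᵢ V - (ηᵢ/2) V`, and `⟨·,·⟩_Y` into the inner product of `L²(e^{-|η|²/4} dη)`.
Gaussian integration by parts gives, with `a = ‖V‖²`, `Dᵢ = ‖∂ᵢ V‖²`, `qᵢ = ‖ηᵢ V‖²`,
`‖GᵢV‖² = Dᵢ + a/2`, `⟨W, L W⟩_Y = -(D₁ + D₂)` and `⟨ηᵢ V, ∂ᵢ V⟩ = qᵢ/4 - a/2`; the last one,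
combined with `0 ≤ ‖ηᵢ V - 4 ∂ᵢ V‖²`, bounds `qᵢ ≤ 4a + 16 Dᵢ`. As `‖W‖²_Y = a` and
`‖∇W‖²_Y = a + D₁ + D₂`, the identity follows, and the inequality reduces to the Gaussian
Poincaré inequality `a ≤ 2 (D₁ + D₂)` for mean-zero `V`. On the line it follows by integrating
`(h a - h b)² ≤ (a - b) (H a - H b)`, where `H' = h'²`, against two independent Gaussians and
applying Stein's identity `E[(X - m) H(X)] = v E[H'(X)]`; on the plane by the law of total
variance, differentiating the marginal `a ↦ ∫ V(a, b) dγ(b)` under the integral sign.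
-/

open MeasureTheory ProbabilityTheory
open scoped NNReal LineDeriv SchwartzMap

lemma memLp_of_continuous_of_abs_le {X : Type*} [TopologicalSpace X] [MeasurableSpace X]
    [OpensMeasurableSpace X] [SecondCountableTopology X] {μ : Measure X} [IsFiniteMeasure μ]
    {F : X → ℝ} (hF : Continuous F) {C : ℝ} (hC : ∀ x, |F x| ≤ C) (p : ENNReal) :
    MemLp F p μ :=
  MemLp.of_bound hF.aestronglyMeasurable C (ae_of_all _ hC)

lemma sq_sub_le_mul_integral_sq {h h' : ℝ → ℝ} (hd : ∀ x, HasDerivAt h (h' x) x)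
    (hc : Continuous h') (a b : ℝ) :
    (h a - h b) ^ 2 ≤ (a - b) * ∫ t in b..a, h' t ^ 2 := by
  wlog hba : b ≤ a generalizing a b
  · have := this b a (le_of_not_ge hba)
    rw [intervalIntegral.integral_symm] at this
    linarith
  rw [← intervalIntegral.integral_eq_sub_of_hasDerivAt (fun t _ => hd t)
    (hc.intervalIntegrable b a)]
  -- the quadratic `k ↦ ∫ (h' - k)²` is nonnegative, so its discriminant is not positive
  have hquad : ∀ k, 0 ≤ (a - b) * (k * k) + (-2 * ∫ t in b..a, h' t) * k
      + ∫ t in b..a, h' t ^ 2 := by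
    intro k
    have h0 : 0 ≤ ∫ t in b..a, (h' t - k) ^ 2 :=
      intervalIntegral.integral_nonneg hba fun t _ => sq_nonneg _
    have e : ∀ t, (h' t - k) ^ 2 = h' t ^ 2 - 2 * k * h' t + k * k := fun t => by ring
    have c1 : Continuous fun t => h' t ^ 2 := by fun_prop
    have c2 : Continuous fun t => 2 * k * h' t := by fun_prop
    have c3 : Continuous fun t => h' t ^ 2 - 2 * k * h' t := by fun_prop
    simp_rw [e] at h0
    rw [intervalIntegral.integral_add (c3.intervalIntegrable _ _) intervalIntegrable_const,
      intervalIntegral.integral_sub (c1.intervalIntegrable _ _) (c2.intervalIntegrable _ _),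
      intervalIntegral.integral_const_mul, intervalIntegral.integral_const, smul_eq_mul] at h0
    linarith
  have := discrim_le_zero hquad
  rw [discrim] at this
  nlinarith

namespace ProbabilityTheory

section Covariance

variable {Ω : Type*} {mΩ : MeasurableSpace Ω} {μ : Measure Ω} [IsProbabilityMeasure μ]
  {f g : Ω → ℝ}

lemma sub_mul_sub_eq (f g : Ω → ℝ) : (fun z : Ω × Ω => (f z.1 - f z.2) * (g z.1 - g z.2)) =
    fun z => f z.1 * g z.1 - f z.1 * g z.2 - g z.1 * f z.2 + f z.2 * g z.2 := by
  ext z; ring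

lemma integrable_prod_sub_mul_sub (hf : MemLp f 2 μ) (hg : MemLp g 2 μ) :
    Integrable (fun z : Ω × Ω => (f z.1 - f z.2) * (g z.1 - g z.2)) (μ.prod μ) := by
  have hfg : Integrable (fun x => f x * g x) μ := hf.integrable_mul hg
  have h1 := hf.integrable one_le_two
  have h2 := hg.integrable one_le_two
  rw [sub_mul_sub_eq]
  exact (((hfg.comp_fst μ).sub' (h1.mul_prod h2)).sub' (h2.mul_prod h1)).fun_add (hfg.comp_snd μ)

lemma integral_prod_sub_mul_sub (hf : MemLp f 2 μ) (hg : MemLp g 2 μ) :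
    ∫ z, (f z.1 - f z.2) * (g z.1 - g z.2) ∂(μ.prod μ) = 2 * cov[f, g; μ] := by
  have hfg : Integrable (fun x => f x * g x) μ := hf.integrable_mul hg
  have h1 := hf.integrable one_le_two
  have h2 := hg.integrable one_le_two
  have i1 := (hfg.comp_fst μ).sub' (h1.mul_prod h2)
  have i2 := i1.sub' (h2.mul_prod h1)
  rw [sub_mul_sub_eq, integral_add i2 (hfg.comp_snd μ), integral_sub i1 (h2.mul_prod h1),
    integral_sub (hfg.comp_fst μ) (h1.mul_prod h2), integral_fun_fst (fun x => f x * g x),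
    integral_fun_snd (fun x => f x * g x), integral_prod_mul, integral_prod_mul,
    covariance_eq_sub hf hg]
  simp only [probReal_univ, one_smul, Pi.mul_apply]
  ring

end Covariance

lemma abs_integral_le_of_abs_le {Ω : Type*} {mΩ : MeasurableSpace Ω} {μ : Measure Ω}
    [IsProbabilityMeasure μ] {F : Ω → ℝ} {C : ℝ} (h : ∀ x, |F x| ≤ C) : |∫ x, F x ∂μ| ≤ C := by
  simpa using norm_integral_le_of_norm_le_const (μ := μ) (f := F) (ae_of_all _ h)

theorem variance_prod_eq_integral_variance_add_variance {α β : Type*} [MeasurableSpace α]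
    [MeasurableSpace β] {μ : Measure α} {ν : Measure β} [IsProbabilityMeasure μ]
    [IsProbabilityMeasure ν] {f : α × β → ℝ} (hf : StronglyMeasurable f) {A : ℝ}
    (hA : ∀ z, |f z| ≤ A) :
    Var[f; μ.prod ν]
      = ∫ a, Var[fun b => f (a, b); ν] ∂μ + Var[fun a => ∫ b, f (a, b) ∂ν; μ] := by
  have hsec : ∀ a, MemLp (fun b => f (a, b)) 2 ν := fun a =>
    MemLp.of_bound (hf.comp_measurable measurable_prodMk_left).aestronglyMeasurable A
      (ae_of_all _ fun b => hA (a, b))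
  have hg : MemLp (fun a => ∫ b, f (a, b) ∂ν) 2 μ :=
    MemLp.of_bound hf.integral_prod_right'.aestronglyMeasurable A
      (ae_of_all _ fun a => abs_integral_le_of_abs_le fun b => hA (a, b))
  have hf2 : MemLp f 2 (μ.prod ν) := MemLp.of_bound hf.aestronglyMeasurable A (ae_of_all _ hA)
  rw [variance_eq_sub hf2, variance_eq_sub hg,
    integral_congr_ae (ae_of_all _ fun a => variance_eq_sub (hsec a))]
  simp only [Pi.pow_apply]
  rw [integral_sub hf2.integrable_sq.integral_prod_left hg.integrable_sq,
    integral_prod _ hf2.integrable_sq, integral_prod _ (hf2.integrable one_le_two)]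
  ring

lemma hasDerivAt_gaussianPDFReal (m : ℝ) (v : ℝ≥0) (x : ℝ) :
    HasDerivAt (gaussianPDFReal m v) (-((x - m) / v) * gaussianPDFReal m v x) x := by
  have h := ((((hasDerivAt_id x).sub_const m).pow 2).fun_neg.div_const (2 * (v : ℝ))).exp.const_mul
    (√(2 * π * v))⁻¹
  simp only [Pi.pow_apply, id] at h
  rw [gaussianPDFReal_def]
  exact h.congr_deriv (by push_cast; ring)

lemma integrable_gaussianPDFReal_mul {m : ℝ} {v : ℝ≥0} (hv : v ≠ 0) {g : ℝ → ℝ}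
    (hg : Integrable g (gaussianReal m v)) :
    Integrable (fun x => gaussianPDFReal m v x * g x) := by
  rw [gaussianReal_of_var_ne_zero m hv, integrable_withDensity_iff_integrable_smul'
    (measurable_gaussianPDF m v) (ae_of_all _ fun _ => gaussianPDF_lt_top)] at hg
  simpa only [toReal_gaussianPDF, smul_eq_mul] using hg

theorem integral_sub_mul_gaussianReal {m : ℝ} {v : ℝ≥0} {f f' : ℝ → ℝ}
    (hd : ∀ x, HasDerivAt f (f' x) x) (hf : Integrable f (gaussianReal m v))
    (hf' : Integrable f' (gaussianReal m v))
    (hxf : Integrable (fun x => (x - m) * f x) (gaussianReal m v)) :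
    ∫ x, (x - m) * f x ∂gaussianReal m v = v * ∫ x, f' x ∂gaussianReal m v := by
  rcases eq_or_ne v 0 with rfl | hv
  · simp [gaussianReal_zero_var]
  set φ := gaussianPDFReal m v
  have hderiv : ∀ x, HasDerivAt (fun x => φ x * f x)
      (φ x * f' x - φ x * ((x - m) * f x) / v) x :=
    fun x => ((hasDerivAt_gaussianPDFReal m v x).mul (hd x)).congr_deriv (by ring)
  have h0 := integral_eq_zero_of_hasDerivAt_of_integrable hderiv
    ((integrable_gaussianPDFReal_mul hv hf').sub
      ((integrable_gaussianPDFReal_mul hv hxf).div_const _))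
    (integrable_gaussianPDFReal_mul hv hf)
  rw [integral_sub (integrable_gaussianPDFReal_mul hv hf')
    ((integrable_gaussianPDFReal_mul hv hxf).div_const _), integral_div,
    sub_eq_zero, eq_div_iff (by exact_mod_cast hv)] at h0
  rw [integral_gaussianReal_eq_integral_smul hv, integral_gaussianReal_eq_integral_smul hv]
  simp only [smul_eq_mul]
  rw [← h0]
  ring

theorem variance_le_mul_integral_deriv_sq_gaussianReal {m : ℝ} {v : ℝ≥0}
    {h h' : ℝ → ℝ} (hd : ∀ x, HasDerivAt h (h' x) x) (hc : Continuous h')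
    (hh : MemLp h 2 (gaussianReal m v)) {B : ℝ} (hB : ∀ x, |h' x| ≤ B) :
    Var[h; gaussianReal m v] ≤ v * ∫ x, h' x ^ 2 ∂gaussianReal m v := by
  set γ := gaussianReal m v
  have hc2 : Continuous fun t => h' t ^ 2 := by fun_prop
  set H : ℝ → ℝ := fun x => ∫ t in (0 : ℝ)..x, h' t ^ 2
  have hHd : ∀ x, HasDerivAt H (h' x ^ 2) x := fun x =>
    (hc2.integral_hasStrictDerivAt 0 x).hasDerivAt
  have hHc : Continuous H := continuous_iff_continuousAt.2 fun x => (hHd x).continuousAt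
  have hid : MemLp (fun x : ℝ => x) 2 γ := memLp_id_gaussianReal 2
  have hidm : MemLp (fun x : ℝ => x - m) 2 γ := hid.sub (memLp_const m)
  have hHm : MemLp H 2 γ := by
    refine (hid.const_mul (B ^ 2)).of_le hHc.aestronglyMeasurable (ae_of_all _ fun x => ?_)
    have := intervalIntegral.norm_integral_le_of_norm_le_const (a := 0) (b := x)
      (fun t _ => (by simpa using pow_le_pow_left₀ (abs_nonneg _) (hB t) 2 :
        ‖h' t ^ 2‖ ≤ B ^ 2))
    simpa [abs_mul] using this
  have hcov : cov[fun x => x - m, H; γ] = v * ∫ x, h' x ^ 2 ∂γ := by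
    rw [covariance_eq_sub hidm hHm, integral_sub (hid.integrable one_le_two) (integrable_const m),
      integral_id_gaussianReal, integral_const, probReal_univ, one_smul, sub_self, zero_mul,
      sub_zero]
    exact integral_sub_mul_gaussianReal hHd (hHm.integrable one_le_two)
      (MemLp.of_bound hc.aestronglyMeasurable B (ae_of_all _ hB)).integrable_sq
      (hidm.integrable_mul hHm)
  have := integral_mono (integrable_prod_sub_mul_sub hh hh) (integrable_prod_sub_mul_sub hidm hHm)
    fun z => by
      rw [← sq, sub_sub_sub_cancel_right, intervalIntegral.integral_interval_sub_left
        (hc2.intervalIntegrable _ _) (hc2.intervalIntegrable _ _)]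
      exact sq_sub_le_mul_integral_sq hd hc z.1 z.2
  rw [integral_prod_sub_mul_sub hh hh, integral_prod_sub_mul_sub hidm hHm,
    covariance_self hh.aestronglyMeasurable.aemeasurable, hcov] at this
  linarith

end ProbabilityTheory

section PartialDerivatives

variable {f : ℝ × ℝ → ℝ}

lemma DifferentiableAt.hasDerivAt_partial_fst {x y : ℝ} (hf : DifferentiableAt ℝ f (x, y)) :
    HasDerivAt (fun s => f (s, y)) (fderiv ℝ f (x, y) (1, 0)) x :=
  hf.hasFDerivAt.comp_hasDerivAt x ((hasDerivAt_id x).prodMk (hasDerivAt_const x y))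

lemma DifferentiableAt.hasDerivAt_partial_snd {x y : ℝ} (hf : DifferentiableAt ℝ f (x, y)) :
    HasDerivAt (fun t => f (x, t)) (fderiv ℝ f (x, y) (0, 1)) y :=
  hf.hasFDerivAt.comp_hasDerivAt y ((hasDerivAt_const y x).prodMk (hasDerivAt_id y))

lemma abs_fderiv_apply_le {B : ℝ} (hB : ∀ z, ‖fderiv ℝ f z‖ ≤ B) (z : ℝ × ℝ) {e : ℝ × ℝ}
    (he : ‖e‖ = 1) : |fderiv ℝ f z e| ≤ B := by
  simpa [he] using ((fderiv ℝ f z).le_opNorm e).trans (by rw [he, mul_one]; exact hB z)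

lemma hasDerivAt_integral_partial_fst {μ : Measure ℝ} [IsFiniteMeasure μ]
    (hf : ContDiff ℝ 1 f) {B : ℝ} (hB : ∀ z, ‖fderiv ℝ f z‖ ≤ B) (a : ℝ)
    (hint : Integrable (fun b => f (a, b)) μ) :
    HasDerivAt (fun a => ∫ b, f (a, b) ∂μ) (∫ b, fderiv ℝ f (a, b) (1, 0) ∂μ) a := by
  have hc : Continuous fun z => fderiv ℝ f z (1, 0) :=
    (hf.continuous_fderiv one_ne_zero).clm_apply continuous_const
  refine (hasDerivAt_integral_of_dominated_loc_of_deriv_le (bound := fun _ => B)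
    (F := fun x b => f (x, b)) (F' := fun x b => fderiv ℝ f (x, b) (1, 0)) (x₀ := a)
    Filter.univ_mem (Filter.Eventually.of_forall fun x => ?_) hint
    (hc.comp (Continuous.prodMk_right a)).aestronglyMeasurable
    (ae_of_all _ fun b x _ => ?_) (integrable_const B)
    (ae_of_all _ fun b x _ => (hf.differentiable one_ne_zero (x, b)).hasDerivAt_partial_fst)).2
  · exact (hf.continuous.comp (Continuous.prodMk_right x)).aestronglyMeasurable
  · exact abs_fderiv_apply_le hB _ (by simp)

namespace ProbabilityTheory

variable {m : ℝ} {v : ℝ≥0}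

lemma variance_integral_le_gaussianReal (hf : ContDiff ℝ 1 f) {A B : ℝ} (hA : ∀ z, |f z| ≤ A)
    (hB : ∀ z, ‖fderiv ℝ f z‖ ≤ B) :
    Var[fun a => ∫ b, f (a, b) ∂gaussianReal m v; gaussianReal m v]
      ≤ v * ∫ z, fderiv ℝ f z (1, 0) ^ 2 ∂(gaussianReal m v).prod (gaussianReal m v) := by
  set γ := gaussianReal m v
  have hf₁ : Continuous fun z => fderiv ℝ f z (1, 0) :=
    (hf.continuous_fderiv one_ne_zero).clm_apply continuous_const
  have hB₁ : ∀ z, |fderiv ℝ f z (1, 0)| ≤ B := fun z => abs_fderiv_apply_le hB z (by simp)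
  set g' := fun a => ∫ b, fderiv ℝ f (a, b) (1, 0) ∂γ
  have hg : ∀ a, HasDerivAt (fun a => ∫ b, f (a, b) ∂γ) (g' a) a := fun a =>
    hasDerivAt_integral_partial_fst hf hB a ((memLp_of_continuous_of_abs_le (F := fun b => f (a, b))
      (hf.continuous.comp (Continuous.prodMk_right a)) (fun _ => hA _) 1).integrable le_rfl)
  have hg'c : Continuous g' :=
    continuous_of_dominated (fun a => (hf₁.comp (Continuous.prodMk_right a)).aestronglyMeasurable)
      (fun a => ae_of_all _ fun b => hB₁ (a, b)) (integrable_const B)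
      (ae_of_all _ fun b => hf₁.comp (Continuous.prodMk_left b))
  have hg'b : ∀ a, |g' a| ≤ B := fun a => abs_integral_le_of_abs_le fun b => hB₁ (a, b)
  have i₁ : Integrable (fun z => fderiv ℝ f z (1, 0) ^ 2) (γ.prod γ) :=
    (memLp_of_continuous_of_abs_le hf₁ hB₁ 2).integrable_sq
  have hsq : ∀ a, g' a ^ 2 ≤ ∫ b, fderiv ℝ f (a, b) (1, 0) ^ 2 ∂γ := fun a => by
    have := variance_nonneg (fun b => fderiv ℝ f (a, b) (1, 0)) γ
    rwa [variance_eq_sub (memLp_of_continuous_of_abs_le (F := fun b => fderiv ℝ f (a, b) (1, 0))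
      (hf₁.comp (Continuous.prodMk_right a)) (fun b => hB₁ (a, b)) 2), Pi.pow_def, sub_nonneg]
      at this
  calc _ ≤ v * ∫ a, g' a ^ 2 ∂γ :=
        variance_le_mul_integral_deriv_sq_gaussianReal hg hg'c (memLp_of_continuous_of_abs_le
          (continuous_iff_continuousAt.2 fun a => (hg a).continuousAt)
          (fun a => abs_integral_le_of_abs_le fun b => hA (a, b)) 2) hg'b
    _ ≤ v * ∫ a, ∫ b, fderiv ℝ f (a, b) (1, 0) ^ 2 ∂γ ∂γ :=
        mul_le_mul_of_nonneg_left (integral_mono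
          (memLp_of_continuous_of_abs_le hg'c hg'b 2).integrable_sq i₁.integral_prod_left hsq)
          v.coe_nonneg
    _ = _ := by rw [integral_prod _ i₁]

theorem variance_le_mul_integral_fderiv_sq_gaussianReal_prod (hf : ContDiff ℝ 1 f) {A B : ℝ}
    (hA : ∀ z, |f z| ≤ A) (hB : ∀ z, ‖fderiv ℝ f z‖ ≤ B) :
    Var[f; (gaussianReal m v).prod (gaussianReal m v)] ≤
      v * ∫ z, (fderiv ℝ f z (1, 0) ^ 2 + fderiv ℝ f z (0, 1) ^ 2)
        ∂(gaussianReal m v).prod (gaussianReal m v) := by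
  set γ := gaussianReal m v
  have hc : ∀ e, Continuous fun z => fderiv ℝ f z e := fun e =>
    (hf.continuous_fderiv one_ne_zero).clm_apply continuous_const
  have hB₂ : ∀ z, |fderiv ℝ f z (0, 1)| ≤ B := fun z => abs_fderiv_apply_le hB z (by simp)
  have i₁ : Integrable (fun z => fderiv ℝ f z (1, 0) ^ 2) (γ.prod γ) :=
    (memLp_of_continuous_of_abs_le (hc _) (fun z => abs_fderiv_apply_le hB z (by simp))
      2).integrable_sq
  have i₂ : Integrable (fun z => fderiv ℝ f z (0, 1) ^ 2) (γ.prod γ) :=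
    (memLp_of_continuous_of_abs_le (hc _) hB₂ 2).integrable_sq
  have hsec : ∫ a, Var[fun b => f (a, b); γ] ∂γ ≤ v * ∫ z, fderiv ℝ f z (0, 1) ^ 2 ∂γ.prod γ := by
    rw [integral_prod _ i₂, ← integral_const_mul]
    exact integral_mono_of_nonneg (ae_of_all _ fun a => variance_nonneg _ _)
      (i₂.integral_prod_left.const_mul _) (ae_of_all _ fun a =>
        variance_le_mul_integral_deriv_sq_gaussianReal
          (fun b => (hf.differentiable one_ne_zero (a, b)).hasDerivAt_partial_snd)
          ((hc _).comp (Continuous.prodMk_right a))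
          (memLp_of_continuous_of_abs_le (hf.continuous.comp (Continuous.prodMk_right a))
            (fun _ => hA _) 2) (fun b => hB₂ (a, b)))
  rw [variance_prod_eq_integral_variance_add_variance hf.continuous.stronglyMeasurable hA,
    integral_add i₁ i₂]
  linarith [variance_integral_le_gaussianReal (m := m) (v := v) hf hA hB]

end ProbabilityTheory

end PartialDerivatives

namespace FokkerPlanck

def gaussianWeight (η : ℝ × ℝ) : ℝ := Real.exp (-(η.1 ^ 2 + η.2 ^ 2) / 4)

def dot (e η : ℝ × ℝ) : ℝ := η.1 * e.1 + η.2 * e.2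

lemma dot_eq (e : ℝ × ℝ) :
    dot e = ⇑(e.1 • ContinuousLinearMap.fst ℝ ℝ ℝ + e.2 • ContinuousLinearMap.snd ℝ ℝ ℝ) := by
  ext η; simp [dot, mul_comm]

lemma hasTemperateGrowth_dot (e : ℝ × ℝ) : (dot e).HasTemperateGrowth := by
  rw [dot_eq]; exact ContinuousLinearMap.hasTemperateGrowth _

def mulDot (e : ℝ × ℝ) : 𝓢(ℝ × ℝ, ℝ) →L[ℝ] 𝓢(ℝ × ℝ, ℝ) := SchwartzMap.smulLeftCLM ℝ (dot e)

@[simp] lemma mulDot_apply (e : ℝ × ℝ) (f : 𝓢(ℝ × ℝ, ℝ)) (η : ℝ × ℝ) :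
    mulDot e f η = dot e η * f η :=
  SchwartzMap.smulLeftCLM_apply_apply (hasTemperateGrowth_dot e) f η

lemma lineDerivOp_mulDot (e : ℝ × ℝ) (f : 𝓢(ℝ × ℝ, ℝ)) :
    ∂_{e} (mulDot e f) = (e.1 ^ 2 + e.2 ^ 2) • f + mulDot e (∂_{e} f) := by
  ext η
  have hdot : HasFDerivAt (dot e)
      (e.1 • ContinuousLinearMap.fst ℝ ℝ ℝ + e.2 • ContinuousLinearMap.snd ℝ ℝ ℝ) η := by
    rw [dot_eq]; exact ContinuousLinearMap.hasFDerivAt _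
  rw [SchwartzMap.lineDerivOp_apply_eq_fderiv, show ⇑(mulDot e f) = fun η => dot e η * f η from
    funext (mulDot_apply e f), (hdot.fun_mul (f.hasFDerivAt η)).fderiv]
  simp only [dot, smul_add, add_apply, smul_apply, smul_eq_mul, ContinuousLinearMap.coe_fst',
    ContinuousLinearMap.coe_snd', mulDot_apply, SchwartzMap.lineDerivOp_apply_eq_fderiv]
  ring

lemma gaussianWeight_pos (η : ℝ × ℝ) : 0 < gaussianWeight η := exp_pos _

lemma gaussianWeight_le_one (η : ℝ × ℝ) : gaussianWeight η ≤ 1 := by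
  rw [gaussianWeight, Real.exp_le_one_iff]
  nlinarith [sq_nonneg η.1, sq_nonneg η.2]

lemma gaussianWeight_mul_wt (η : ℝ × ℝ) : gaussianWeight η * wt η = 1 := by
  rw [gaussianWeight, wt, ← Real.exp_add]
  ring_nf
  exact Real.exp_zero

lemma continuous_gaussianWeight : Continuous gaussianWeight := by
  unfold gaussianWeight; fun_prop

lemma hasFDerivAt_gaussianWeight (η : ℝ × ℝ) :
    HasFDerivAt gaussianWeight (-(gaussianWeight η / 2) •
      (η.1 • ContinuousLinearMap.fst ℝ ℝ ℝ + η.2 • ContinuousLinearMap.snd ℝ ℝ ℝ)) η := by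
  have h := (((hasFDerivAt_fst (p := η) (𝕜 := ℝ)).pow 2).fun_add
    ((hasFDerivAt_snd (p := η) (𝕜 := ℝ)).pow 2)).const_mul (-1 / 4 : ℝ) |>.exp
  rw [show gaussianWeight = fun η => rexp (-1 / 4 * (η.1 ^ 2 + η.2 ^ 2)) by
    ext η; simp only [gaussianWeight]; ring_nf]
  refine h.congr_fderiv (ContinuousLinearMap.ext fun e => ?_)
  simp only [Nat.add_one_sub_one, pow_one, nsmul_eq_mul, Nat.cast_ofNat, smul_add, add_apply,
    smul_apply, ContinuousLinearMap.coe_fst', smul_eq_mul, ContinuousLinearMap.coe_snd', neg_smul,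
    neg_apply]
  ring

lemma fderiv_gaussianWeight_mul_apply {U : ℝ × ℝ → ℝ} {η : ℝ × ℝ}
    (hU : DifferentiableAt ℝ U η) (e : ℝ × ℝ) :
    fderiv ℝ (fun η => gaussianWeight η * U η) η e
      = gaussianWeight η * (fderiv ℝ U η e - dot e η / 2 * U η) := by
  rw [((hasFDerivAt_gaussianWeight η).fun_mul hU.hasFDerivAt).fderiv]
  simp only [smul_add, neg_smul, smul_neg, add_apply, smul_apply, smul_eq_mul, neg_apply,
    ContinuousLinearMap.coe_fst', ContinuousLinearMap.coe_snd', dot]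
  ring

lemma integrable_mul_mul_gaussianWeight (f g : 𝓢(ℝ × ℝ, ℝ)) :
    Integrable fun η => f η * g η * gaussianWeight η := by
  refine (g.integrable.bdd_mul (f := fun η => f η * gaussianWeight η)
    (c := ‖f.toBoundedContinuousFunction‖)
    (f.continuous.mul continuous_gaussianWeight).aestronglyMeasurable
    (ae_of_all _ fun η => ?_)).congr (ae_of_all _ fun η => by simp only; ring)
  rw [norm_mul, Real.norm_of_nonneg (gaussianWeight_pos η).le]
  exact (mul_le_of_le_one_right (norm_nonneg _) (gaussianWeight_le_one η)).trans
    (f.toBoundedContinuousFunction.norm_coe_le_norm η)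

lemma integral_mul_gaussianWeight (F : ℝ × ℝ → ℝ) :
    ∫ η, F η * gaussianWeight η
      = 4 * π * ∫ η, F η ∂(gaussianReal 0 2).prod (gaussianReal 0 2) := by
  rw [gaussianReal_of_var_ne_zero 0 two_ne_zero,
    prod_withDensity (measurable_gaussianPDF 0 2) (measurable_gaussianPDF 0 2),
    ← Measure.volume_eq_prod, integral_withDensity_eq_integral_toReal_smul (by fun_prop)
      (ae_of_all _ fun _ => ENNReal.mul_lt_top gaussianPDF_lt_top gaussianPDF_lt_top),
    ← integral_const_mul]
  congr 1; ext η
  simp only [ENNReal.toReal_mul, toReal_gaussianPDF, smul_eq_mul, gaussianPDFReal, gaussianWeight,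
    NNReal.coe_ofNat, sub_zero]
  have hs : (√(2 * π * 2))⁻¹ * (√(2 * π * 2))⁻¹ = (4 * π)⁻¹ := by
    rw [← mul_inv, mul_self_sqrt (by positivity)]; ring
  have he : rexp (-η.1 ^ 2 / (2 * 2)) * rexp (-η.2 ^ 2 / (2 * 2))
      = rexp (-(η.1 ^ 2 + η.2 ^ 2) / 4) := by
    rw [← exp_add]; ring_nf
  calc F η * rexp (-(η.1 ^ 2 + η.2 ^ 2) / 4)
      = 4 * π * ((√(2 * π * 2))⁻¹ * (√(2 * π * 2))⁻¹)
        * (rexp (-η.1 ^ 2 / (2 * 2)) * rexp (-η.2 ^ 2 / (2 * 2))) * F η := by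
        rw [hs, he]; field_simp
    _ = _ := by ring

/-- `gaussInner f g = ⟨e^{-|η|²/4} f, e^{-|η|²/4} g⟩_Y`. -/
def gaussInner : 𝓢(ℝ × ℝ, ℝ) →ₗ[ℝ] 𝓢(ℝ × ℝ, ℝ) →ₗ[ℝ] ℝ :=
  LinearMap.mk₂ ℝ (fun f g => ∫ η, f η * g η * gaussianWeight η)
    (fun f f' g => by
      simp only [add_apply, add_mul]
      exact integral_add (integrable_mul_mul_gaussianWeight f g)
        (integrable_mul_mul_gaussianWeight f' g))
    (fun c f g => by
      simp only [smul_apply, smul_eq_mul, mul_assoc, integral_const_mul])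
    (fun f g g' => by
      simp only [add_apply, mul_add, add_mul]
      exact integral_add (integrable_mul_mul_gaussianWeight f g)
        (integrable_mul_mul_gaussianWeight f g'))
    (fun c f g => by
      simp only [smul_apply, smul_eq_mul, mul_left_comm _ c, mul_assoc, integral_const_mul])

lemma gaussInner_apply (f g : 𝓢(ℝ × ℝ, ℝ)) :
    gaussInner f g = ∫ η, f η * g η * gaussianWeight η := rfl

lemma gaussInner_comm (f g : 𝓢(ℝ × ℝ, ℝ)) : gaussInner f g = gaussInner g f := by
  simp only [gaussInner_apply, mul_comm (f _)]

lemma gaussInner_mulDot_left (e : ℝ × ℝ) (f g : 𝓢(ℝ × ℝ, ℝ)) :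
    gaussInner (mulDot e f) g = gaussInner f (mulDot e g) := by
  simp only [gaussInner_apply, mulDot_apply]
  congr 1; ext η; ring

lemma gaussInner_self_nonneg (f : 𝓢(ℝ × ℝ, ℝ)) : 0 ≤ gaussInner f f :=
  integral_nonneg fun η => mul_nonneg (mul_self_nonneg _) (gaussianWeight_pos η).le

lemma integral_eq_gaussInner_add_gaussInner {F : ℝ × ℝ → ℝ} (f₁ g₁ f₂ g₂ : 𝓢(ℝ × ℝ, ℝ))
    (h : ∀ η, F η = (f₁ η * g₁ η + f₂ η * g₂ η) * gaussianWeight η) :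
    ∫ η, F η = gaussInner f₁ g₁ + gaussInner f₂ g₂ := by
  simp_rw [h, add_mul]
  exact integral_add (integrable_mul_mul_gaussianWeight f₁ g₁)
    (integrable_mul_mul_gaussianWeight f₂ g₂)

lemma gaussInner_lineDerivOp_right (e : ℝ × ℝ) (f g : 𝓢(ℝ × ℝ, ℝ)) :
    gaussInner f (∂_{e} g) = -gaussInner (∂_{e} f) g + 1 / 2 * gaussInner (mulDot e f) g := by
  simp only [gaussInner_apply]
  have hd : ∀ η, fderiv ℝ (fun η => gaussianWeight η * g η) η e
      = gaussianWeight η * (∂_{e} g η - dot e η / 2 * g η) := fun η => by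
    rw [fderiv_gaussianWeight_mul_apply g.differentiableAt,
      SchwartzMap.lineDerivOp_apply_eq_fderiv]
  have i1 := integrable_mul_mul_gaussianWeight (∂_{e} f) g
  have i2 := integrable_mul_mul_gaussianWeight f (∂_{e} g)
  have i3 := (integrable_mul_mul_gaussianWeight (mulDot e f) g).const_mul (1 / 2)
  have key := integral_mul_fderiv_eq_neg_fderiv_mul_of_integrable (μ := volume) (v := e)
    (f := f) (g := fun η => gaussianWeight η * g η)
    (i1.congr (ae_of_all _ fun η => by simp only [SchwartzMap.lineDerivOp_apply_eq_fderiv]; ring))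
    ((i2.sub i3).congr (ae_of_all _ fun η => by simp only [Pi.sub_apply, hd, mulDot_apply]; ring))
    ((integrable_mul_mul_gaussianWeight f g).congr (ae_of_all _ fun η => by ring))
    (fun η _ => f.differentiableAt)
    (fun η _ => (hasFDerivAt_gaussianWeight η).differentiableAt.mul g.differentiableAt)
  have e1 : ∫ η, f η * fderiv ℝ (fun η => gaussianWeight η * g η) η e
      = (∫ η, f η * ∂_{e} g η * gaussianWeight η)
        - 1 / 2 * ∫ η, mulDot e f η * g η * gaussianWeight η := by
    rw [← integral_const_mul, ← integral_sub i2 i3]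
    congr 1; ext η; rw [hd, mulDot_apply]; ring
  have e2 : ∫ η, fderiv ℝ f η e * (gaussianWeight η * g η)
      = ∫ η, ∂_{e} f η * g η * gaussianWeight η := by
    congr 1; ext η; rw [SchwartzMap.lineDerivOp_apply_eq_fderiv]; ring
  rw [e1, e2] at key
  linarith

/-- `gaussDeriv e f = e^{|η|²/4} ∂_e (e^{-|η|²/4} f)`. -/
def gaussDeriv (e : ℝ × ℝ) : 𝓢(ℝ × ℝ, ℝ) →L[ℝ] 𝓢(ℝ × ℝ, ℝ) :=
  LineDeriv.lineDerivOpCLM ℝ 𝓢(ℝ × ℝ, ℝ) e - (1 / 2 : ℝ) • mulDot e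

lemma gaussDeriv_eq (e : ℝ × ℝ) (f : 𝓢(ℝ × ℝ, ℝ)) :
    gaussDeriv e f = ∂_{e} f - (1 / 2 : ℝ) • mulDot e f := rfl

@[simp] lemma gaussDeriv_apply (e : ℝ × ℝ) (f : 𝓢(ℝ × ℝ, ℝ)) (η : ℝ × ℝ) :
    gaussDeriv e f η = ∂_{e} f η - dot e η / 2 * f η := by
  simp only [gaussDeriv_eq, sub_apply, smul_apply, mulDot_apply, smul_eq_mul]
  ring

lemma gaussInner_gaussDeriv_lineDerivOp (e : ℝ × ℝ) (f : 𝓢(ℝ × ℝ, ℝ)) :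
    gaussInner f (gaussDeriv e (∂_{e} f)) = -gaussInner (∂_{e} f) (∂_{e} f) := by
  rw [gaussDeriv_eq, map_sub, map_smul, smul_eq_mul, gaussInner_lineDerivOp_right,
    gaussInner_mulDot_left]
  ring

section UnitDirection

variable {e : ℝ × ℝ} (f : 𝓢(ℝ × ℝ, ℝ))

lemma gaussInner_mulDot_lineDerivOp (he : e.1 ^ 2 + e.2 ^ 2 = 1) :
    gaussInner (mulDot e f) (∂_{e} f)
      = gaussInner (mulDot e f) (mulDot e f) / 4 - gaussInner f f / 2 := by
  have h := gaussInner_lineDerivOp_right e (mulDot e f) f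
  rw [lineDerivOp_mulDot, he, one_smul, map_add, LinearMap.add_apply,
    gaussInner_comm (mulDot e _), gaussInner_mulDot_left, gaussInner_comm (∂_{e} f),
    gaussInner_mulDot_left e (mulDot e f)] at h
  linarith

lemma gaussInner_gaussDeriv_self (he : e.1 ^ 2 + e.2 ^ 2 = 1) :
    gaussInner (gaussDeriv e f) (gaussDeriv e f)
      = gaussInner (∂_{e} f) (∂_{e} f) + gaussInner f f / 2 := by
  simp only [gaussDeriv_eq, map_sub, map_smul, LinearMap.sub_apply, LinearMap.smul_apply,
    smul_eq_mul]
  rw [gaussInner_comm (∂_{e} f) (mulDot e f), gaussInner_mulDot_lineDerivOp f he]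
  ring

lemma gaussInner_mulDot_self_le (he : e.1 ^ 2 + e.2 ^ 2 = 1) :
    gaussInner (mulDot e f) (mulDot e f)
      ≤ 4 * gaussInner f f + 16 * gaussInner (∂_{e} f) (∂_{e} f) := by
  have h := gaussInner_self_nonneg (mulDot e f - (4 : ℝ) • ∂_{e} f)
  simp only [map_sub, map_smul, LinearMap.sub_apply, LinearMap.smul_apply, smul_eq_mul] at h
  rw [gaussInner_comm (∂_{e} f) (mulDot e f), gaussInner_mulDot_lineDerivOp f he] at h
  linarith

lemma gaussDeriv_gaussDeriv_apply (he : e.1 ^ 2 + e.2 ^ 2 = 1) (η : ℝ × ℝ) :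
    gaussDeriv e (gaussDeriv e f) η
      = gaussDeriv e (∂_{e} f) η - f η / 2 - dot e η / 2 * gaussDeriv e f η := by
  have h : ∂_{e} (gaussDeriv e f) = ∂_{e} (∂_{e} f) - (1 / 2 : ℝ) • ∂_{e} (mulDot e f) := by
    rw [gaussDeriv_eq, ← LineDeriv.lineDerivOpCLM_apply (R := ℝ), map_sub, map_smul]; rfl
  rw [gaussDeriv_apply, h, lineDerivOp_mulDot, he, one_smul]
  simp only [sub_apply, add_apply, smul_apply, smul_eq_mul, mulDot_apply, gaussDeriv_apply]
  ring

end UnitDirection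

local notation "∂₁" => LineDeriv.lineDerivOp ((1, 0) : ℝ × ℝ)
local notation "∂₂" => LineDeriv.lineDerivOp ((0, 1) : ℝ × ℝ)

lemma gaussInner_self_le (V : 𝓢(ℝ × ℝ, ℝ)) (hV : ∫ η, gaussianWeight η * V η = 0) :
    gaussInner V V ≤ 2 * (gaussInner (∂₁ V) (∂₁ V) + gaussInner (∂₂ V) (∂₂ V)) := by
  set ν := (gaussianReal 0 2).prod (gaussianReal 0 2)
  have hmean : ∫ z, V z ∂ν = 0 := by
    have h := integral_mul_gaussianWeight V
    simp_rw [mul_comm (V _), hV] at h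
    exact (mul_eq_zero.1 h.symm).resolve_left (by positivity)
  have hP := variance_le_mul_integral_fderiv_sq_gaussianReal_prod (m := 0) (v := 2) (V.smooth 1)
    (fun z => V.toBoundedContinuousFunction.norm_coe_le_norm z)
    (fun z => (SchwartzMap.fderivCLM ℝ (ℝ × ℝ) ℝ V).toBoundedContinuousFunction.norm_coe_le_norm z)
  rw [variance_of_integral_eq_zero V.continuous.aemeasurable hmean] at hP
  have h1 : gaussInner V V = 4 * π * ∫ z, V z ^ 2 ∂ν := by
    rw [gaussInner_apply, ← integral_mul_gaussianWeight]
    simp_rw [sq]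
  have h2 : gaussInner (∂₁ V) (∂₁ V) + gaussInner (∂₂ V) (∂₂ V)
      = 4 * π * ∫ z, (fderiv ℝ V z (1, 0) ^ 2 + fderiv ℝ V z (0, 1) ^ 2) ∂ν := by
    rw [← integral_mul_gaussianWeight]
    refine (integral_eq_gaussInner_add_gaussInner _ _ _ _ fun η => ?_).symm
    simp only [SchwartzMap.lineDerivOp_apply_eq_fderiv]
    ring
  rw [h1, h2]
  push_cast at hP
  nlinarith [mul_le_mul_of_nonneg_left hP (by positivity : 0 ≤ 4 * π)]

lemma pd1_eq_fderiv {F : ℝ × ℝ → ℝ} {η : ℝ × ℝ} (hF : DifferentiableAt ℝ F η) :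
    pd1 F η = fderiv ℝ F η (1, 0) :=
  hF.hasDerivAt_partial_fst.deriv

lemma pd2_eq_fderiv {F : ℝ × ℝ → ℝ} {η : ℝ × ℝ} (hF : DifferentiableAt ℝ F η) :
    pd2 F η = fderiv ℝ F η (0, 1) :=
  hF.hasDerivAt_partial_snd.deriv

lemma pd1_gaussianWeight_mul (f : 𝓢(ℝ × ℝ, ℝ)) :
    pd1 (fun η => gaussianWeight η * f η) = fun η => gaussianWeight η * gaussDeriv (1, 0) f η := by
  ext η
  rw [pd1_eq_fderiv ((hasFDerivAt_gaussianWeight η).differentiableAt.fun_mul f.differentiableAt),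
    fderiv_gaussianWeight_mul_apply f.differentiableAt, gaussDeriv_apply,
    SchwartzMap.lineDerivOp_apply_eq_fderiv]

lemma pd2_gaussianWeight_mul (f : 𝓢(ℝ × ℝ, ℝ)) :
    pd2 (fun η => gaussianWeight η * f η) = fun η => gaussianWeight η * gaussDeriv (0, 1) f η := by
  ext η
  rw [pd2_eq_fderiv ((hasFDerivAt_gaussianWeight η).differentiableAt.fun_mul f.differentiableAt),
    fderiv_gaussianWeight_mul_apply f.differentiableAt, gaussDeriv_apply,
    SchwartzMap.lineDerivOp_apply_eq_fderiv]

lemma LFP_gaussianWeight_mul (V : 𝓢(ℝ × ℝ, ℝ)) (η : ℝ × ℝ) :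
    LFP (fun η => gaussianWeight η * V η) η = gaussianWeight η *
      (gaussDeriv (1, 0) (∂₁ V) η + gaussDeriv (0, 1) (∂₂ V) η) := by
  rw [LFP, pd1_gaussianWeight_mul, pd1_gaussianWeight_mul, pd2_gaussianWeight_mul,
    pd2_gaussianWeight_mul]
  simp only
  rw [gaussDeriv_gaussDeriv_apply V (by norm_num), gaussDeriv_gaussDeriv_apply V (by norm_num)]
  simp only [dot]
  ring

section GaussianMultiple

variable (V : 𝓢(ℝ × ℝ, ℝ))

lemma integral_sq_mul_wt :
    ∫ η, (gaussianWeight η * V η) ^ 2 * wt η = gaussInner V V :=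
  integral_congr_ae (ae_of_all _ fun η => by
    linear_combination V η ^ 2 * gaussianWeight η * gaussianWeight_mul_wt η)

lemma integral_pd_sq_mul_wt :
    ∫ η, ((pd1 (fun η => gaussianWeight η * V η) η) ^ 2
        + (pd2 (fun η => gaussianWeight η * V η) η) ^ 2) * wt η
      = gaussInner (∂₁ V) (∂₁ V) + gaussInner (∂₂ V) (∂₂ V) + gaussInner V V := by
  rw [pd1_gaussianWeight_mul, pd2_gaussianWeight_mul,
    integral_eq_gaussInner_add_gaussInner (gaussDeriv (1, 0) V) (gaussDeriv (1, 0) V)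
      (gaussDeriv (0, 1) V) (gaussDeriv (0, 1) V) fun η => by
        linear_combination (gaussDeriv (1, 0) V η ^ 2 + gaussDeriv (0, 1) V η ^ 2)
          * gaussianWeight η * gaussianWeight_mul_wt η,
    gaussInner_gaussDeriv_self V (by norm_num), gaussInner_gaussDeriv_self V (by norm_num)]
  ring

lemma integral_mul_LFP_mul_wt :
    ∫ η, gaussianWeight η * V η * LFP (fun η => gaussianWeight η * V η) η * wt η
      = -(gaussInner (∂₁ V) (∂₁ V) + gaussInner (∂₂ V) (∂₂ V)) := by
  rw [integral_eq_gaussInner_add_gaussInner V (gaussDeriv (1, 0) (∂₁ V))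
      V (gaussDeriv (0, 1) (∂₂ V)) fun η => by
        rw [LFP_gaussianWeight_mul]
        linear_combination V η * (gaussDeriv (1, 0) (∂₁ V) η + gaussDeriv (0, 1) (∂₂ V) η)
          * gaussianWeight η * gaussianWeight_mul_wt η,
    gaussInner_gaussDeriv_lineDerivOp, gaussInner_gaussDeriv_lineDerivOp]
  ring

lemma integral_sq_norm_mul_sq_mul_wt_le :
    ∫ η, (η.1 ^ 2 + η.2 ^ 2) * (gaussianWeight η * V η) ^ 2 * wt η
      ≤ 8 * gaussInner V V + 16 * (gaussInner (∂₁ V) (∂₁ V) + gaussInner (∂₂ V) (∂₂ V)) := by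
  rw [integral_eq_gaussInner_add_gaussInner (mulDot (1, 0) V) (mulDot (1, 0) V)
    (mulDot (0, 1) V) (mulDot (0, 1) V) fun η => by
      simp only [mulDot_apply, dot]
      linear_combination (η.1 ^ 2 + η.2 ^ 2) * V η ^ 2 * gaussianWeight η
        * gaussianWeight_mul_wt η]
  linarith [gaussInner_mulDot_self_le (e := (1, 0)) V (by norm_num),
    gaussInner_mulDot_self_le (e := (0, 1)) V (by norm_num)]

end GaussianMultiple

end FokkerPlanck

open FokkerPlanck

/-- shifted spectral-gap inequality for `L` in `Y = L²(e^{|η|²/4}dη)`: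
for smooth rapidly decaying `W` (i.e. `W = e^{-|η|²/4} V` with `V` Schwartz) of zero mean,
`⟨W, LW⟩_Y = ‖W‖²_Y − ‖∇W‖²_Y ≤ −(1/12)‖W‖²_Y − (1/96)‖ηW‖²_Y − (1/6)‖∇W‖²_Y`. -/
theorem fokker_planck_spectral_gap :
    ∀ (V : SchwartzMap (ℝ × ℝ) ℝ) (W : ℝ × ℝ → ℝ),
      (∀ η : ℝ × ℝ, W η = Real.exp (-(η.1 ^ 2 + η.2 ^ 2) / 4) * V η) →
      (∫ η : ℝ × ℝ, W η) = 0 →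
      (∫ η : ℝ × ℝ, W η * LFP W η * wt η)
          = (∫ η : ℝ × ℝ, (W η) ^ 2 * wt η)
            - (∫ η : ℝ × ℝ, ((pd1 W η) ^ 2 + (pd2 W η) ^ 2) * wt η) ∧
      (∫ η : ℝ × ℝ, W η * LFP W η * wt η)
          ≤ -(1 / 12) * (∫ η : ℝ × ℝ, (W η) ^ 2 * wt η)
            - (1 / 96) * (∫ η : ℝ × ℝ, (η.1 ^ 2 + η.2 ^ 2) * (W η) ^ 2 * wt η)
            - (1 / 6) * (∫ η : ℝ × ℝ, ((pd1 W η) ^ 2 + (pd2 W η) ^ 2) * wt η) := by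
  intro V W hW hmean
  obtain rfl : W = fun η => gaussianWeight η * V η := funext hW
  beta_reduce at hmean ⊢
  rw [integral_mul_LFP_mul_wt, integral_sq_mul_wt, integral_pd_sq_mul_wt]
  have hpoincare := gaussInner_self_le V hmean
  have hmoment := integral_sq_norm_mul_sq_mul_wt_le V
  constructor <;> linarith
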